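/- arXiv:0911.0277 — 2 statements merged into one kernel-verified Lean document; each statement's English description precedes it below -/
import Mathlib

section
/- Let $V$ be a finite-dimensional vector space and $N$ a nilpotent endomorphism with $N^{m+1}=0$ and $N^m \neq 0$. Then there exists a unique increasing filtration $0 \subset W_{-m} \subset \cdots \subset W_m = V$ such that $N(W_k) \subseteq W_{k-2}$ for all $k$ and $N^k$ induces an isomorphism $\mathrm{Gr}^W_k(V) \to \mathrm{Gr}^W_{-k}(V)$ for every $k \geq 0$. -/
/-- A function `W : ℤ → Submodule K V` is the monodromy weight filtration of the
nilpotent endomorphism `N` (with `N^(m+1) = 0`): it is increasing, trivial below `-m`,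
all of `V` from `m` on, satisfies `N (W k) ⊆ W (k-2)`, and for every `k ≥ 0` the map
induced by `N^k` from `Gr^W_k = W k / W (k-1)` to `Gr^W_{-k} = W (-k) / W (-k-1)` is an
isomorphism (expressed by surjectivity and injectivity on graded pieces). -/
def IsWeightFiltration {K V : Type*} [Field K] [AddCommGroup V] [Module K V]
    (N : V →ₗ[K] V) (m : ℕ) (W : ℤ → Submodule K V) : Prop :=
  Monotone W ∧
  (∀ k : ℤ, k < -(m : ℤ) → W k = ⊥) ∧
  (∀ k : ℤ, (m : ℤ) ≤ k → W k = ⊤) ∧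
  (∀ k : ℤ, Submodule.map N (W k) ≤ W (k - 2)) ∧
  (∀ k : ℕ,
    Submodule.map (N ^ k) (W (k : ℤ)) ⊔ W (-(k : ℤ) - 1) = W (-(k : ℤ)) ∧
    ∀ x ∈ W (k : ℤ), (N ^ k) x ∈ W (-(k : ℤ) - 1) → x ∈ W ((k : ℤ) - 1))

lemma wf_pow_map {K V : Type*} [Field K] [AddCommGroup V] [Module K V]
    {N : V →ₗ[K] V} {m : ℕ} {W : ℤ → Submodule K V} (hW : IsWeightFiltration N m W)
    (j : ℕ) : ∀ k : ℤ, Submodule.map (N ^ j) (W k) ≤ W (k - 2 * (j : ℤ)) := by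
  induction j with
  | zero => intro k; rw [show ((N^0 : Module.End K V)) = LinearMap.id from rfl, Submodule.map_id, show k - 2 * ((0:ℕ):ℤ) = k by push_cast; ring]
  | succ j ih =>
    intro k
    have h2 : Submodule.map (N ^ (j+1)) (W k)
        = Submodule.map (N ^ j) (Submodule.map N (W k)) := by
      rw [pow_succ N j, Module.End.mul_eq_comp, Submodule.map_comp]
    rw [h2]
    have h3 := Submodule.map_mono (f := N ^ j) (hW.2.2.2.1 k)
    refine le_trans (le_trans h3 (ih (k - 2))) ?_
    have : k - 2 - 2 * (j : ℤ) = k - 2 * ((j : ℤ) + 1) := by ring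
    rw [this]
    push_cast
    exact le_refl _

universe u₁ u₂

lemma weight_aux {K : Type u₁} [Field K] :
    ∀ (m : ℕ) {V : Type u₂} [AddCommGroup V] [Module K V] (N : V →ₗ[K] V),
      N ^ (m + 1) = 0 → ∃! W : ℤ → Submodule K V, IsWeightFiltration N m W := by
  intro m
  induction m with
  | zero =>
    intro V _ _ N hN
    have hN0 : N = 0 := by rw [← pow_one N]; exact hN
    set W₀ : ℤ → Submodule K V := fun k => if 0 ≤ k then ⊤ else ⊥ with hW₀def
    have htop : ∀ k : ℤ, 0 ≤ k → W₀ k = ⊤ := fun k hk => if_pos hk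
    have hbot : ∀ k : ℤ, k < 0 → W₀ k = ⊥ := fun k hk => if_neg (by omega)
    refine ⟨W₀, ⟨?_, ?_, ?_, ?_, ?_⟩, ?_⟩
    · intro a b hab
      rcases le_or_gt 0 b with hb | hb
      · rw [htop b hb]; exact le_top
      · rw [hbot a (by omega)]; exact bot_le
    · intro k hk; exact hbot k (by omega)
    · intro k hk; exact htop k (by omega)
    · intro k; rw [hN0, Submodule.map_zero]; exact bot_le
    · intro k
      by_cases hk : k = 0
      · subst hk
        constructor
        · rw [htop ((0:ℕ):ℤ) (by omega), htop (-((0:ℕ):ℤ)) (by omega),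
            hbot (-((0:ℕ):ℤ)-1) (by omega), pow_zero, sup_bot_eq]
          exact Submodule.map_id _
        · intro x hx hx'
          simpa using hx'
      · have hNk : (N : Module.End K V) ^ k = 0 := by rw [hN0]; exact zero_pow hk
        constructor
        · rw [hNk, Submodule.map_zero, hbot (-(k:ℤ)) (by omega), hbot (-(k:ℤ)-1) (by omega)]
          simp
        · intro x hx hx'
          rw [htop ((k:ℤ)-1) (by omega)]; trivial
    · intro W hW
      funext k
      rcases le_or_gt 0 k with h | h
      · rw [hW.2.2.1 k (by omega), htop k h]
      · rw [hW.2.1 k (by omega), hbot k h]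
  | succ m IH =>
    intro V _ _ N hN
    -- hN : N ^ (m + 1 + 1) = 0
    set Kr := LinearMap.ker (N ^ (m + 1)) with hKrdef
    set Im := LinearMap.range (N ^ (m + 1)) with hImdef
    have hIK : Im ≤ Kr := by
      rintro x ⟨y, rfl⟩
      show (N ^ (m+1)) ((N ^ (m+1)) y) = 0
      rw [← Module.End.mul_apply, ← pow_add,
        pow_eq_zero_of_le (by omega : m + 1 + 1 ≤ m + 1 + (m + 1)) hN]
      rfl
    have hNKr : ∀ x ∈ Kr, N x ∈ Kr := by
      intro x hx
      show (N ^ (m+1)) (N x) = 0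
      rw [← Module.End.mul_apply, ← pow_succ, hN]
      rfl
    set Nr : Kr →ₗ[K] Kr := N.restrict hNKr with hNrdef
    have hNr_coe : ∀ x : Kr, (Nr x : V) = N x := fun x => rfl
    have hNr_pow_coe : ∀ (j : ℕ) (x : Kr), (((Nr ^ j) x : Kr) : V) = (N ^ j) (x : V) := by
      intro j
      induction j with
      | zero => intro x; rfl
      | succ j ih =>
        intro x
        rw [pow_succ, pow_succ, Module.End.mul_apply, Module.End.mul_apply, ih (Nr x), hNr_coe]
    set I : Submodule K Kr := Im.comap Kr.subtype with hIdef
    have hI_mem : ∀ x : Kr, x ∈ I ↔ (x : V) ∈ Im := fun x => Iff.rfl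
    set q := I.mkQ with hqdef
    have hq_surj : Function.Surjective q := Submodule.mkQ_surjective I
    have hqmem : ∀ y : Kr, q y = 0 ↔ y ∈ I := by
      intro y
      rw [hqdef, Submodule.mkQ_apply, Submodule.Quotient.mk_eq_zero]
    have hqI : ∀ y : Kr, q y = 0 ↔ (y : V) ∈ Im := by
      intro y
      rw [hqdef, Submodule.mkQ_apply, Submodule.Quotient.mk_eq_zero]
      exact hI_mem y
    have hNrI : I ≤ I.comap Nr := by
      intro x hx
      rcases (hI_mem x).1 hx with ⟨y, hy⟩
      show Nr x ∈ I
      rw [hI_mem, hNr_coe, ← hy, ← Module.End.mul_apply, ← pow_succ', pow_succ,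
        Module.End.mul_apply]
      exact ⟨N y, rfl⟩
    set N' : (Kr ⧸ I) →ₗ[K] (Kr ⧸ I) := Submodule.mapQ I I Nr hNrI with hN'def
    have hN'q : ∀ x : Kr, N' (q x) = q (Nr x) := by
      intro x
      rw [hqdef, hN'def, Submodule.mkQ_apply, Submodule.mapQ_apply, Submodule.mkQ_apply]
    have hN'_pow_q : ∀ (j : ℕ) (x : Kr), (N' ^ j) (q x) = q ((Nr ^ j) x) := by
      intro j
      induction j with
      | zero => intro x; rfl
      | succ j ih =>
        intro x
        rw [pow_succ', Module.End.mul_apply, ih x, hN'q, pow_succ', Module.End.mul_apply]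
    have hN'nil : N' ^ (m + 1) = 0 := by
      apply LinearMap.ext
      intro x'
      rcases hq_surj x' with ⟨x, rfl⟩
      rw [hN'_pow_q, LinearMap.zero_apply]
      rw [hqI, hNr_pow_coe, (LinearMap.mem_ker.1 x.2 : (N ^ (m+1)) (x:V) = 0)]
      exact zero_mem Im
    obtain ⟨W', hW', hW'uniq⟩ := IH N' hN'nil
    set F : ℤ → Submodule K V :=
      fun k => Submodule.map Kr.subtype (Submodule.comap q (W' k)) with hFdef
    have hF_intro : ∀ (k : ℤ) (y : Kr), q y ∈ W' k → (y : V) ∈ F k :=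
      fun k y hy => ⟨y, hy, rfl⟩
    have hF_elim : ∀ (k : ℤ) (x : V), x ∈ F k → ∃ y : Kr, (y : V) = x ∧ q y ∈ W' k := by
      intro k x hx
      rcases hx with ⟨y, hy, rfl⟩
      exact ⟨y, rfl, hy⟩
    have hF_le_Kr : ∀ k, F k ≤ Kr := fun k => Submodule.map_subtype_le _ _
    have hIm_le_F : ∀ k, Im ≤ F k := by
      intro k x hx
      exact hF_intro k ⟨x, hIK hx⟩ (by rw [(hqI ⟨x, hIK hx⟩).2 hx]; exact zero_mem _)
    have hF_mono : Monotone F :=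
      fun a b hab => Submodule.map_mono (Submodule.comap_mono (hW'.1 hab))
    have hF_bot : ∀ k : ℤ, k < -(m:ℤ) → F k = Im := by
      intro k hk
      refine le_antisymm ?_ (hIm_le_F k)
      intro x hx
      rcases hF_elim k x hx with ⟨y, rfl, hy⟩
      rw [hW'.2.1 k hk, Submodule.mem_bot] at hy
      exact (hqI y).1 hy
    have hF_top : ∀ k : ℤ, (m:ℤ) ≤ k → F k = Kr := by
      intro k hk
      refine le_antisymm (hF_le_Kr k) ?_
      intro x hx
      exact hF_intro k ⟨x, hx⟩ (by rw [hW'.2.2.1 k hk]; trivial)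
    set W₀ : ℤ → Submodule K V :=
      fun k => if ((m:ℤ)+1) ≤ k then ⊤ else if k < -((m:ℤ)+1) then ⊥ else F k with hW₀def
    have hW₀_top : ∀ k, ((m:ℤ)+1) ≤ k → W₀ k = ⊤ := fun k hk => if_pos hk
    have hW₀_bot : ∀ k, k < -((m:ℤ)+1) → W₀ k = ⊥ := by
      intro k hk
      show (if ((m:ℤ)+1) ≤ k then ⊤ else if k < -((m:ℤ)+1) then ⊥ else F k) = ⊥
      rw [if_neg (by omega), if_pos hk]
    have hW₀_mid : ∀ k, -((m:ℤ)+1) ≤ k → k ≤ (m:ℤ) → W₀ k = F k := by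
      intro k h1 h2
      show (if ((m:ℤ)+1) ≤ k then ⊤ else if k < -((m:ℤ)+1) then ⊥ else F k) = F k
      rw [if_neg (by omega), if_neg (by omega)]
    have hmain : IsWeightFiltration N (m+1) W₀ := by
      refine ⟨?_, ?_, ?_, ?_, ?_⟩
      · -- monotone
        intro a b hab
        rcases le_or_gt ((m:ℤ)+1) b with hb | hb
        · rw [hW₀_top b hb]; exact le_top
        rcases lt_or_ge a (-((m:ℤ)+1)) with ha | ha
        · rw [hW₀_bot a ha]; exact bot_le
        rw [hW₀_mid a ha (by omega), hW₀_mid b (by omega) (by omega)]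
        exact hF_mono hab
      · intro k hk; exact hW₀_bot k (by push_cast at hk ⊢; omega)
      · intro k hk; exact hW₀_top k (by push_cast at hk ⊢; omega)
      · -- N maps W k into W (k-2)
        intro k
        rcases le_or_gt ((m:ℤ)+1) (k-2) with h1 | h1
        · rw [hW₀_top _ h1]; exact le_top
        rcases lt_or_ge k (-((m:ℤ)+1)) with h2 | h2
        · rw [hW₀_bot k h2, Submodule.map_bot]; exact bot_le
        by_cases hk1 : k = -((m:ℤ)+1)
        · subst hk1
          rw [hW₀_bot (-((m:ℤ)+1)-2) (by omega)]
          intro x hx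
          rcases Submodule.mem_map.1 hx with ⟨y, hy, rfl⟩
          rw [hW₀_mid (-((m:ℤ)+1)) (by omega) (by omega), hF_bot (-((m:ℤ)+1)) (by omega)] at hy
          rcases hy with ⟨z, rfl⟩
          rw [Submodule.mem_bot, ← Module.End.mul_apply, ← pow_succ', hN]
          rfl
        by_cases hk2 : k = -(m:ℤ)
        · subst hk2
          rw [hW₀_bot (-(m:ℤ)-2) (by omega)]
          intro x hx
          rcases Submodule.mem_map.1 hx with ⟨y, hy, rfl⟩
          rw [hW₀_mid (-(m:ℤ)) (by omega) (by omega)] at hy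
          rcases hF_elim _ _ hy with ⟨u, hu, hqu⟩
          have h5 := (hW'.2.2.2.2 m).1
          rw [hW'.2.1 (-(m:ℤ)-1) (by omega), hW'.2.2.1 (m:ℤ) le_rfl, sup_bot_eq] at h5
          rw [← h5] at hqu
          rcases Submodule.mem_map.1 hqu with ⟨z', _, hz'⟩
          rcases hq_surj z' with ⟨z, rfl⟩
          rw [hN'_pow_q] at hz'
          have hd : (u - (Nr^m) z : Kr) ∈ I :=
            (hqmem _).1 (by rw [map_sub, hz', sub_self])
          rcases (hI_mem _).1 hd with ⟨w, hw⟩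
          have hw' : (u : V) - (N^m) (z : V) = (N^(m+1)) w := by
            rw [hw]; push_cast [hNr_pow_coe]; ring
          have hcoe : (u : V) = (N^m) (z : V) + (N^(m+1)) w := sub_eq_iff_eq_add'.1 hw' 
          rw [Submodule.mem_bot, ← hu, hcoe, map_add]
          have e1 : N ((N^m) (z:V)) = 0 := by
            rw [← Module.End.mul_apply, ← pow_succ']
            exact LinearMap.mem_ker.1 (by
              have : (N ^ (m+1)) (z:V) = 0 := LinearMap.mem_ker.1 z.2
              rw [pow_succ'] at this ⊢
              exact this)
          have e2 : N ((N^(m+1)) w) = 0 := by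
            rw [← Module.End.mul_apply, ← pow_succ', hN]; rfl
          rw [e1, e2, add_zero]
        by_cases hk3 : k ≤ (m:ℤ)
        · rw [hW₀_mid k (by omega) hk3, hW₀_mid (k-2) (by omega) (by omega)]
          intro x hx
          rcases Submodule.mem_map.1 hx with ⟨y, hy, rfl⟩
          rcases hF_elim _ _ hy with ⟨u, hu, hqu⟩
          have hmem : N' (q u) ∈ W' (k-2) :=
            hW'.2.2.2.1 k (Submodule.mem_map.2 ⟨q u, hqu, rfl⟩)
          rw [hN'q] at hmem
          have := hF_intro _ _ hmem
          rwa [hNr_coe, hu] at this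
        by_cases hk4 : k = (m:ℤ)+2
        · subst hk4
          rw [hW₀_mid ((m:ℤ)+2-2) (by omega) (by omega), hF_top ((m:ℤ)+2-2) (by omega)]
          intro x hx
          rcases Submodule.mem_map.1 hx with ⟨y, _, rfl⟩
          show (N ^ (m+1)) (N y) = 0
          rw [← Module.End.mul_apply, ← pow_succ, hN]
          rfl
        · have hk : k = (m:ℤ)+1 := by omega
          subst hk
          rw [hW₀_mid ((m:ℤ)+1-2) (by omega) (by omega)]
          intro x hx
          rcases Submodule.mem_map.1 hx with ⟨y, _, rfl⟩
          have hNy : N y ∈ Kr := by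
            show (N ^ (m+1)) (N y) = 0
            rw [← Module.End.mul_apply, ← pow_succ, hN]
            rfl
          have hNrm : (Nr^m) ⟨N y, hNy⟩ ∈ I := by
            rw [hI_mem, hNr_pow_coe]
            exact ⟨y, by rw [← Module.End.mul_apply, ← pow_succ]⟩
          have h5 := (hW'.2.2.2.2 m).2 (q ⟨N y, hNy⟩)
            (by rw [hW'.2.2.1 (m:ℤ) le_rfl]; trivial)
            (by rw [hN'_pow_q, (hqmem _).2 hNrm]; exact zero_mem _)
          have := hF_intro _ _ h5
          rwa [show (m:ℤ)+1-2 = (m:ℤ)-1 by ring]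
      · intro k
        by_cases hk : k ≤ m
        · have e1 : W₀ (k:ℤ) = F (k:ℤ) := hW₀_mid _ (by omega) (by omega)
          have e2 : W₀ (-(k:ℤ)) = F (-(k:ℤ)) := hW₀_mid _ (by omega) (by omega)
          have e3 : W₀ (-(k:ℤ)-1) = F (-(k:ℤ)-1) := hW₀_mid _ (by omega) (by omega)
          have e4 : W₀ ((k:ℤ)-1) = F ((k:ℤ)-1) := hW₀_mid _ (by omega) (by omega)
          have h5 := hW'.2.2.2.2 k
          constructor
          · rw [e1, e2, e3]
            apply le_antisymm
            · apply sup_le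
              · intro x hx
                rcases Submodule.mem_map.1 hx with ⟨y, hy, rfl⟩
                rcases hF_elim _ _ hy with ⟨u, hu, hqu⟩
                have hmem : (N'^k) (q u) ∈ W' (-(k:ℤ)) := by
                  rw [← h5.1]
                  exact Submodule.mem_sup_left (Submodule.mem_map.2 ⟨q u, hqu, rfl⟩)
                rw [hN'_pow_q] at hmem
                have := hF_intro _ _ hmem
                rwa [hNr_pow_coe, hu] at this
              · exact hF_mono (by omega)
            · intro x hx
              rcases hF_elim _ _ hx with ⟨u, hu, hqu⟩
              rw [← h5.1] at hqu
              rcases Submodule.mem_sup.1 hqu with ⟨a, ha, b, hb, hab⟩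
              rcases Submodule.mem_map.1 ha with ⟨z', hz', hz'e⟩
              rcases hq_surj z' with ⟨z, rfl⟩
              have hb' : b = q (u - (Nr^k) z) := by
                rw [map_sub, ← hN'_pow_q, hz'e, ← hab]; abel
              rw [Submodule.mem_sup]
              refine ⟨(N^k) (z:V), Submodule.mem_map.2 ⟨(z:V), hF_intro _ z hz', rfl⟩,
                ((u - (Nr^k) z : Kr) : V), hF_intro _ _ (by rw [← hb']; exact hb), ?_⟩
              rw [← hu]
              push_cast [hNr_pow_coe]
              abel
          · intro x hxk hxn
            rw [e1] at hxk; rw [e3] at hxn; rw [e4]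
            rcases hF_elim _ _ hxk with ⟨u, hu, hqu⟩
            rcases hF_elim _ _ hxn with ⟨v, hv, hqv⟩
            have huv : (Nr^k) u = v := Subtype.ext (by rw [hNr_pow_coe, hu, hv])
            have := h5.2 (q u) hqu (by rw [hN'_pow_q, huv]; exact hqv)
            have := hF_intro _ _ this
            rwa [hu] at this
        · by_cases hk2 : k = m + 1
          · subst hk2
            constructor
            · rw [hW₀_top ((m+1:ℕ):ℤ) (by omega), hW₀_bot (-((m+1:ℕ):ℤ)-1) (by omega),
                hW₀_mid (-((m+1:ℕ):ℤ)) (by omega) (by omega), hF_bot (-((m+1:ℕ):ℤ)) (by omega),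
                Submodule.map_top, sup_bot_eq]
            · intro x hxk hxn
              rw [hW₀_bot (-((m+1:ℕ):ℤ)-1) (by omega), Submodule.mem_bot] at hxn
              rw [hW₀_mid (((m+1:ℕ):ℤ)-1) (by omega) (by omega), hF_top (((m+1:ℕ):ℤ)-1) (by omega)]
              exact hxn
          · have hk3 : m + 2 ≤ k := by omega
            have hNk : (N : Module.End K V) ^ k = 0 := pow_eq_zero_of_le (by omega) hN
            constructor
            · rw [hNk, Submodule.map_zero, hW₀_bot (-(k:ℤ)) (by omega),
                hW₀_bot (-(k:ℤ)-1) (by omega)]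
              simp
            · intro x _ _
              rw [hW₀_top ((k:ℤ)-1) (by omega)]
              trivial
    have key : ∀ W : ℤ → Submodule K V, IsWeightFiltration N (m+1) W → W = W₀ := by
      intro W hW
      have wmono := hW.1
      have wbot := hW.2.1
      have wtop := hW.2.2.1
      have wmap := hW.2.2.2.1
      have wgr := hW.2.2.2.2
      have hWm : W (m:ℤ) = Kr := by
        apply le_antisymm
        · intro x hx
          show (N ^ (m+1)) x = 0
          have := wf_pow_map hW (m+1) (m:ℤ) (Submodule.mem_map.2 ⟨x, hx, rfl⟩)
          rw [wbot ((m:ℤ) - 2*((m+1:ℕ):ℤ)) (by push_cast; omega)] at this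
          simpa using this
        · intro x hx
          have h5 := (wgr (m+1)).2 x (by rw [wtop ((m+1:ℕ):ℤ) (by omega)]; trivial)
            (by rw [show ((N^(m+1)) x : V) = 0 from hx]; exact zero_mem _)
          rwa [show ((m+1:ℕ):ℤ) - 1 = (m:ℤ) by push_cast; ring] at h5
      have hWneg : W (-((m:ℤ)+1)) = Im := by
        have h5 := (wgr (m+1)).1
        rw [wtop ((m+1:ℕ):ℤ) (by omega), wbot (-((m+1:ℕ):ℤ)-1) (by omega),
          Submodule.map_top, sup_bot_eq] at h5
        rw [show -((m:ℤ)+1) = -((m+1:ℕ):ℤ) by push_cast; ring, ← h5, hImdef]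
      have hWle : ∀ k : ℤ, k ≤ (m:ℤ) → W k ≤ Kr := fun k hk => hWm ▸ wmono hk
      have hWge : ∀ k : ℤ, -((m:ℤ)+1) ≤ k → Im ≤ W k := fun k hk => hWneg ▸ wmono hk
      set G : ℤ → Submodule K (Kr ⧸ I) :=
        fun k => Submodule.map q (Submodule.comap Kr.subtype (W k)) with hGdef
      have hG_intro : ∀ (k : ℤ) (y : Kr), (y:V) ∈ W k → q y ∈ G k :=
        fun k y hy => ⟨y, hy, rfl⟩
      have hG_elim : ∀ (k : ℤ) (x' : Kr ⧸ I), x' ∈ G k →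
          ∃ y : Kr, (y:V) ∈ W k ∧ q y = x' := by
        intro k x' hx'
        rcases hx' with ⟨y, hy, rfl⟩
        exact ⟨y, hy, rfl⟩
      have hGmono : Monotone G :=
        fun a b hab => Submodule.map_mono (Submodule.comap_mono (wmono hab))
      have hGbot : ∀ k : ℤ, k < -(m:ℤ) → G k = ⊥ := by
        intro k hk
        rw [eq_bot_iff]
        intro x' hx'
        rcases hG_elim k x' hx' with ⟨y, hy, rfl⟩
        have : (y:V) ∈ Im := hWneg ▸ wmono (by omega : k ≤ -((m:ℤ)+1)) hy
        rw [Submodule.mem_bot]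
        exact (hqI y).2 this
      have hGtop : ∀ k : ℤ, (m:ℤ) ≤ k → G k = ⊤ := by
        intro k hk
        rw [eq_top_iff]
        intro x' _
        rcases hq_surj x' with ⟨y, rfl⟩
        exact hG_intro k y ((hWm ▸ wmono hk : Kr ≤ W k) y.2)
      have hGmap : ∀ k : ℤ, Submodule.map N' (G k) ≤ G (k-2) := by
        intro k x' hx'
        rcases Submodule.mem_map.1 hx' with ⟨y', hy', rfl⟩
        rcases hG_elim k y' hy' with ⟨y, hy, rfl⟩
        rw [hN'q]
        exact hG_intro _ _ (by
          rw [hNr_coe]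
          exact wmap k (Submodule.mem_map.2 ⟨(y:V), hy, rfl⟩))
      have hG : IsWeightFiltration N' m G := by
        refine ⟨hGmono, hGbot, hGtop, hGmap, ?_⟩
        intro k
        by_cases hk : k ≤ m
        · constructor
          · apply le_antisymm
            · apply sup_le
              · intro x' hx'
                rcases Submodule.mem_map.1 hx' with ⟨y', hy', rfl⟩
                rcases hG_elim _ y' hy' with ⟨y, hy, rfl⟩
                rw [hN'_pow_q]
                apply hG_intro
                rw [hNr_pow_coe]
                rw [← (wgr k).1]
                exact Submodule.mem_sup_left (Submodule.mem_map.2 ⟨(y:V), hy, rfl⟩)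
              · exact hGmono (by omega)
            · intro x' hx'
              rcases hG_elim _ x' hx' with ⟨y, hy, rfl⟩
              rw [← (wgr k).1] at hy
              rcases Submodule.mem_sup.1 hy with ⟨a, ha, b, hb, hab⟩
              rcases Submodule.mem_map.1 ha with ⟨a0, ha0, rfl⟩
              have haK : a0 ∈ Kr := hWle (k:ℤ) (by omega) ha0
              have hbK : b ∈ Kr := hWle (-(k:ℤ)-1) (by omega) hb
              have hy_eq : y = (Nr^k) ⟨a0, haK⟩ + ⟨b, hbK⟩ := Subtype.ext (by
                push_cast [hNr_pow_coe]
                exact hab.symm)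
              rw [Submodule.mem_sup]
              exact ⟨(N'^k) (q ⟨a0, haK⟩),
                Submodule.mem_map.2 ⟨q ⟨a0, haK⟩, hG_intro _ _ ha0, rfl⟩,
                q ⟨b, hbK⟩, hG_intro _ _ hb,
                by rw [hN'_pow_q, ← map_add, ← hy_eq]⟩
          · intro x' hx' hx'n
            rcases hG_elim _ x' hx' with ⟨y, hy, rfl⟩
            rw [hN'_pow_q] at hx'n
            rcases hG_elim _ _ hx'n with ⟨z, hz, hqz⟩
            have hker : ((Nr^k) y - z : Kr) ∈ I :=
              (hqmem _).1 (by rw [map_sub, hqz, sub_self])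
            have him : ((N^k) (y:V) - (z:V)) ∈ Im := by
              have := (hI_mem _).1 hker
              rwa [show (((Nr^k) y - z : Kr) : V) = (N^k) (y:V) - (z:V) by
                push_cast [hNr_pow_coe]; ring] at this
            have hNky : (N^k) (y:V) ∈ W (-(k:ℤ)-1) := by
              have h1 : ((N^k) (y:V) - (z:V)) ∈ W (-(k:ℤ)-1) := hWge _ (by omega) him
              have := add_mem h1 hz
              rwa [sub_add_cancel] at this
            exact hG_intro _ _ ((wgr k).2 (y:V) hy hNky)
        · have hNk' : (N' : Module.End K (Kr ⧸ I)) ^ k = 0 :=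
            pow_eq_zero_of_le (by omega) hN'nil
          constructor
          · rw [hNk', Submodule.map_zero, hGbot (-(k:ℤ)) (by omega),
              hGbot (-(k:ℤ)-1) (by omega)]
            simp
          · intro x' _ _
            rw [hGtop ((k:ℤ)-1) (by omega)]
            trivial
      have hGW' : G = W' := hW'uniq G hG
      funext k
      rcases le_or_gt ((m:ℤ)+1) k with hc1 | hc1
      · rw [hW₀_top k hc1, wtop k (by omega)]
      rcases lt_or_ge k (-((m:ℤ)+1)) with hc2 | hc2
      · rw [hW₀_bot k hc2, wbot k (by omega)]
      · rw [hW₀_mid k hc2 (by omega)]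
        apply le_antisymm
        · intro x hx
          have hxK : x ∈ Kr := hWle k (by omega) hx
          have hin : q ⟨x, hxK⟩ ∈ G k := hG_intro k ⟨x, hxK⟩ hx
          rw [hGW'] at hin
          exact hF_intro k ⟨x, hxK⟩ hin
        · intro x hx
          rcases hF_elim k x hx with ⟨u, hu, hqu⟩
          rw [← hGW'] at hqu
          rcases hG_elim k _ hqu with ⟨v, hv, hqv⟩
          have hker : (u - v : Kr) ∈ I :=
            (hqmem _).1 (by rw [map_sub, hqv, sub_self])
          have him : ((u:V) - (v:V)) ∈ Im := (hI_mem _).1 hker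
          have : (u:V) ∈ W k := by
            have h1 := add_mem (hWge k hc2 him) hv
            rwa [sub_add_cancel] at h1
          rwa [hu] at this
    exact ⟨W₀, hmain, key⟩





/-- Existence and uniqueness of the monodromy weight filtration of a nilpotent
endomorphism `N` with `N^(m+1) = 0` and `N^m ≠ 0` of a finite-dimensional vector
space over a field of characteristic zero. -/
theorem exists_unique_monodromy_weight_filtration
    {K V : Type*} [Field K] [CharZero K] [AddCommGroup V] [Module K V]
    [FiniteDimensional K V] (N : V →ₗ[K] V) (m : ℕ)
    (h1 : N ^ (m + 1) = 0) (h2 : N ^ m ≠ 0) :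
    ∃! W : ℤ → Submodule K V, IsWeightFiltration N m W :=
  weight_aux m N h1
end

section
/- For the coefficients $A_n = \binom{2n}{n}^2 \sum_{k=0}^n \binom{n}{k}^2 \binom{n+k}{k}$, the power series $\Phi(z) = \sum_{n \geq 0} A_n z^n$ is annihilated by the operator $\theta^4 - 4z(11\theta^2 + 11\theta + 3)(2\theta+1)^2 - 16z^2(2\theta+1)^2(2\theta+3)^2$ with $\theta = z \frac{d}{dz}$; equivalently, the coefficients satisfy the recursion $n^4 A_n = 4(11(n-1)^2 + 11(n-1) + 3)(2n-1)^2 A_{n-1} + 16(2n-3)^2(2n-1)^2 A_{n-2}$ for all $n \geq 2$, together with $A_0 = 1$, $A_1 = 12$. -/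
/-! Auxiliary machinery: Apéry-style creative telescoping for
`b n = Σ C(n,k)² C(n+k,k)`. -/

def apB (n : ℕ) : ℕ := ∑ k ∈ Finset.range (n+1), (n.choose k)^2 * ((n+k).choose k)

def Fq (m k : ℕ) : ℚ := (m.choose k : ℚ)^2 * ((m+k).choose k : ℚ)

def Pq (n k : ℚ) : ℚ := k^2 + 6*n*k - 5*k - 11*n^2 + 7*n

def Gq (m : ℕ) : ℕ → ℚ
  | 0 => 0
  | (t+1) => Pq ((m:ℚ)+2) ((t:ℚ)+1) * Fq (m+1) t

lemma Fq_eq_zero {m k : ℕ} (h : m < k) : Fq m k = 0 := by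
  simp [Fq, Nat.choose_eq_zero_of_lt h]

lemma fact_ne (x : ℕ) : (x.factorial : ℚ) ≠ 0 := by
  exact_mod_cast (Nat.factorial_pos x).ne'

lemma step_generic (j s : ℕ) :
    ((j:ℚ)+s+3)^2 * Fq (j+s+3) (j+1)
      - (11*((j:ℚ)+s+3)^2 - 11*((j:ℚ)+s+3) + 3) * Fq (j+s+2) (j+1)
      - ((j:ℚ)+s+2)^2 * Fq (j+s+1) (j+1)
    = Pq ((j:ℚ)+s+3) ((j:ℚ)+2) * Fq (j+s+2) (j+1)
      - Pq ((j:ℚ)+s+3) ((j:ℚ)+1) * Fq (j+s+2) j := by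
  unfold Fq Pq
  rw [show (j+s+3)+(j+1) = 2*j+s+4 from by ring, show (j+s+2)+(j+1) = 2*j+s+3 from by ring,
      show (j+s+1)+(j+1) = 2*j+s+2 from by ring, show (j+s+2)+j = 2*j+s+2 from by ring]
  rw [Nat.cast_choose ℚ (show j+1 ≤ j+s+3 by omega),
      Nat.cast_choose ℚ (show j+1 ≤ j+s+2 by omega),
      Nat.cast_choose ℚ (show j+1 ≤ j+s+1 by omega),
      Nat.cast_choose ℚ (show j ≤ j+s+2 by omega),
      Nat.cast_choose ℚ (show j+1 ≤ 2*j+s+4 by omega),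
      Nat.cast_choose ℚ (show j+1 ≤ 2*j+s+3 by omega),
      Nat.cast_choose ℚ (show j+1 ≤ 2*j+s+2 by omega),
      Nat.cast_choose ℚ (show j ≤ 2*j+s+2 by omega)]
  rw [show j+s+3-(j+1) = s+2 from by omega, show j+s+2-(j+1) = s+1 from by omega,
      show j+s+1-(j+1) = s from by omega, show j+s+2-j = s+2 from by omega,
      show 2*j+s+4-(j+1) = j+s+3 from by omega, show 2*j+s+3-(j+1) = j+s+2 from by omega,
      show 2*j+s+2-(j+1) = j+s+1 from by omega, show 2*j+s+2-j = j+s+2 from by omega]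
  have e1 : ((j+1).factorial : ℚ) = ((j:ℚ)+1) * j.factorial := by
    push_cast [Nat.factorial_succ]; ring
  have e2 : ((s+1).factorial : ℚ) = ((s:ℚ)+1) * s.factorial := by
    push_cast [Nat.factorial_succ]; ring
  have e3 : ((s+2).factorial : ℚ) = ((s:ℚ)+2)*(((s:ℚ)+1) * s.factorial) := by
    rw [show s+2 = (s+1)+1 from rfl]; push_cast [Nat.factorial_succ]; ring
  have e4 : ((j+s+2).factorial : ℚ) = ((j:ℚ)+s+2) * (j+s+1).factorial := by
    rw [show j+s+2 = (j+s+1)+1 from rfl]; push_cast [Nat.factorial_succ]; ring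
  have e5 : ((j+s+3).factorial : ℚ) = ((j:ℚ)+s+3)*(((j:ℚ)+s+2) * (j+s+1).factorial) := by
    rw [show j+s+3 = (j+s+2)+1 from rfl, Nat.factorial_succ]; push_cast; rw [e4]; ring
  have e6 : ((2*j+s+3).factorial : ℚ) = (2*(j:ℚ)+s+3) * (2*j+s+2).factorial := by
    rw [show 2*j+s+3 = (2*j+s+2)+1 from rfl]; push_cast [Nat.factorial_succ]; ring
  have e7 : ((2*j+s+4).factorial : ℚ) = (2*(j:ℚ)+s+4)*((2*(j:ℚ)+s+3) * (2*j+s+2).factorial) := by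
    rw [show 2*j+s+4 = (2*j+s+3)+1 from rfl, Nat.factorial_succ]; push_cast; rw [e6]; ring
  rw [e1, e2, e3, e4, e5, e6, e7]
  have h1 := fact_ne j; have h2 := fact_ne s
  have h3 := fact_ne (j+s+1); have h4 := fact_ne (2*j+s+2)
  have hj : ((j:ℚ)+1) ≠ 0 := by positivity
  have hs1 : ((s:ℚ)+1) ≠ 0 := by positivity
  have hs2 : ((s:ℚ)+2) ≠ 0 := by positivity
  have hc1 : ((j:ℚ)+s+2) ≠ 0 := by positivity
  have hc2 : ((j:ℚ)+s+3) ≠ 0 := by positivity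
  have hd1 : (2*(j:ℚ)+s+3) ≠ 0 := by positivity
  have hd2 : (2*(j:ℚ)+s+4) ≠ 0 := by positivity
  field_simp
  ring

lemma step_b1 (m : ℕ) :
    ((m:ℚ)+2)^2 * Fq (m+2) (m+1)
      - (11*((m:ℚ)+2)^2 - 11*((m:ℚ)+2) + 3) * Fq (m+1) (m+1)
      - ((m:ℚ)+1)^2 * Fq m (m+1)
    = Pq ((m:ℚ)+2) ((m:ℚ)+2) * Fq (m+1) (m+1)
      - Pq ((m:ℚ)+2) ((m:ℚ)+1) * Fq (m+1) m := by
  rw [Fq_eq_zero (show m < m+1 by omega)]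
  unfold Fq Pq
  rw [show (m+2)+(m+1) = 2*m+3 from by ring, show (m+1)+(m+1) = 2*m+2 from by ring,
      show (m+1)+m = 2*m+1 from by ring]
  rw [Nat.cast_choose ℚ (show m+1 ≤ m+2 by omega),
      Nat.cast_choose ℚ (show m+1 ≤ m+1 by omega),
      Nat.cast_choose ℚ (show m ≤ m+1 by omega),
      Nat.cast_choose ℚ (show m+1 ≤ 2*m+3 by omega),
      Nat.cast_choose ℚ (show m+1 ≤ 2*m+2 by omega),
      Nat.cast_choose ℚ (show m ≤ 2*m+1 by omega)]
  rw [show m+2-(m+1) = 1 from by omega, show m+1-(m+1) = 0 from by omega,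
      show m+1-m = 1 from by omega, show 2*m+3-(m+1) = m+2 from by omega,
      show 2*m+2-(m+1) = m+1 from by omega, show 2*m+1-m = m+1 from by omega]
  have e1 : ((m+1).factorial : ℚ) = ((m:ℚ)+1) * m.factorial := by
    push_cast [Nat.factorial_succ]; ring
  have e2 : ((m+2).factorial : ℚ) = ((m:ℚ)+2)*(((m:ℚ)+1) * m.factorial) := by
    rw [show m+2 = (m+1)+1 from rfl, Nat.factorial_succ]; push_cast; rw [e1]; ring
  have e3 : ((2*m+2).factorial : ℚ) = (2*(m:ℚ)+2) * (2*m+1).factorial := by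
    rw [show 2*m+2 = (2*m+1)+1 from rfl]; push_cast [Nat.factorial_succ]; ring
  have e4 : ((2*m+3).factorial : ℚ) = (2*(m:ℚ)+3)*((2*(m:ℚ)+2) * (2*m+1).factorial) := by
    rw [show 2*m+3 = (2*m+2)+1 from rfl, Nat.factorial_succ]; push_cast; rw [e3]; ring
  rw [e1, e2, e3, e4]
  simp only [Nat.factorial_zero, Nat.factorial_one, Nat.cast_one]
  have h1 := fact_ne m; have h2 := fact_ne (2*m+1)
  have hm1 : ((m:ℚ)+1) ≠ 0 := by positivity
  have hm2 : ((m:ℚ)+2) ≠ 0 := by positivity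
  have hm3 : (2*(m:ℚ)+2) ≠ 0 := by positivity
  have hm4 : (2*(m:ℚ)+3) ≠ 0 := by positivity
  field_simp
  ring

lemma step_b2 (m : ℕ) :
    ((m:ℚ)+2)^2 * Fq (m+2) (m+2)
      - (11*((m:ℚ)+2)^2 - 11*((m:ℚ)+2) + 3) * Fq (m+1) (m+2)
      - ((m:ℚ)+1)^2 * Fq m (m+2)
    = Pq ((m:ℚ)+2) ((m:ℚ)+3) * Fq (m+1) (m+2)
      - Pq ((m:ℚ)+2) ((m:ℚ)+2) * Fq (m+1) (m+1) := by
  rw [Fq_eq_zero (show m+1 < m+2 by omega), Fq_eq_zero (show m < m+2 by omega)]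
  unfold Fq Pq
  rw [show (m+2)+(m+2) = 2*m+4 from by ring, show (m+1)+(m+1) = 2*m+2 from by ring]
  rw [Nat.cast_choose ℚ (show m+2 ≤ m+2 by omega),
      Nat.cast_choose ℚ (show m+1 ≤ m+1 by omega),
      Nat.cast_choose ℚ (show m+2 ≤ 2*m+4 by omega),
      Nat.cast_choose ℚ (show m+1 ≤ 2*m+2 by omega)]
  rw [show m+2-(m+2) = 0 from by omega, show m+1-(m+1) = 0 from by omega,
      show 2*m+4-(m+2) = m+2 from by omega, show 2*m+2-(m+1) = m+1 from by omega]
  have e1 : ((m+1).factorial : ℚ) = ((m:ℚ)+1) * m.factorial := by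
    push_cast [Nat.factorial_succ]; ring
  have e2 : ((m+2).factorial : ℚ) = ((m:ℚ)+2)*(((m:ℚ)+1) * m.factorial) := by
    rw [show m+2 = (m+1)+1 from rfl, Nat.factorial_succ]; push_cast; rw [e1]; ring
  have e3 : ((2*m+3).factorial : ℚ) = (2*(m:ℚ)+3) * (2*m+2).factorial := by
    rw [show 2*m+3 = (2*m+2)+1 from rfl]; push_cast [Nat.factorial_succ]; ring
  have e4 : ((2*m+4).factorial : ℚ) = (2*(m:ℚ)+4)*((2*(m:ℚ)+3) * (2*m+2).factorial) := by
    rw [show 2*m+4 = (2*m+3)+1 from rfl, Nat.factorial_succ]; push_cast; rw [e3]; ring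
  rw [e1, e2, e4]
  simp only [Nat.factorial_zero, Nat.cast_one]
  have h1 := fact_ne m; have h2 := fact_ne (2*m+2)
  have hm1 : ((m:ℚ)+1) ≠ 0 := by positivity
  have hm2 : ((m:ℚ)+2) ≠ 0 := by positivity
  have hm3 : (2*(m:ℚ)+3) ≠ 0 := by positivity
  have hm4 : (2*(m:ℚ)+4) ≠ 0 := by positivity
  field_simp
  ring

lemma step (m k : ℕ) :
    ((m:ℚ)+2)^2 * Fq (m+2) k
      - (11*((m:ℚ)+2)^2 - 11*((m:ℚ)+2) + 3) * Fq (m+1) k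
      - ((m:ℚ)+1)^2 * Fq m k
    = Gq m (k+1) - Gq m k := by
  cases k with
  | zero =>
      simp only [Gq, Fq, Pq, Nat.choose_zero_right, Nat.add_zero, Nat.cast_zero, Nat.cast_one]
      ring
  | succ j =>
      have hG1 : Gq m (j+1+1) = Pq ((m:ℚ)+2) (((j+1:ℕ):ℚ)+1) * Fq (m+1) (j+1) := rfl
      have hG0 : Gq m (j+1) = Pq ((m:ℚ)+2) (((j:ℕ):ℚ)+1) * Fq (m+1) j := rfl
      rw [hG1, hG0]
      rcases Nat.lt_or_ge j m with h | h
      · -- generic case : j+1 ≤ m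
        obtain ⟨s, rfl⟩ : ∃ s, m = j+1+s := ⟨m - (j+1), by omega⟩
        rw [show j+1+s+2 = j+s+3 from by omega, show j+1+s+1 = j+s+2 from by omega,
            show j+1+s = j+s+1 from by omega]
        have H := step_generic j s
        simp only [Pq] at H ⊢
        push_cast at H ⊢
        linear_combination H
      · rcases Nat.lt_or_ge j (m+1) with h' | h'
        · -- j = m, k = m+1
          rw [show j = m from by omega]
          have H := step_b1 m
          simp only [Pq] at H ⊢
          push_cast at H ⊢
          linear_combination H
        · rcases Nat.lt_or_ge j (m+2) with h'' | h''
          · -- j = m+1, k = m+2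
            obtain rfl : j = m+1 := by omega
            have H := step_b2 m
            simp only [Pq] at H ⊢
            push_cast at H ⊢
            linear_combination H
          · -- k = j+1 ≥ m+3 : everything vanishes
            rw [Fq_eq_zero (show m+2 < j+1 by omega), Fq_eq_zero (show m+1 < j+1 by omega),
                Fq_eq_zero (show m < j+1 by omega), Fq_eq_zero (show m+1 < j by omega)]
            ring

lemma apB_cast (n : ℕ) : (apB n : ℚ) = ∑ k ∈ Finset.range (n+1), Fq n k := by
  unfold apB Fq
  push_cast
  rfl

lemma apery2 (m : ℕ) :
    ((m:ℚ)+2)^2 * apB (m+2)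
      = (11*((m:ℚ)+2)^2 - 11*((m:ℚ)+2) + 3) * apB (m+1) + ((m:ℚ)+1)^2 * apB m := by
  have hb2 : (apB (m+2) : ℚ) = ∑ k ∈ Finset.range (m+3), Fq (m+2) k := apB_cast (m+2)
  have hb1 : (apB (m+1) : ℚ) = ∑ k ∈ Finset.range (m+3), Fq (m+1) k := by
    rw [apB_cast]
    conv_rhs => rw [Finset.sum_range_succ]
    rw [Fq_eq_zero (show m+1 < m+2 by omega), add_zero]
  have hb0 : (apB m : ℚ) = ∑ k ∈ Finset.range (m+3), Fq m k := by
    rw [apB_cast]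
    conv_rhs => rw [Finset.sum_range_succ, Finset.sum_range_succ]
    rw [Fq_eq_zero (show m < m+2 by omega), Fq_eq_zero (show m < m+1 by omega),
        add_zero, add_zero]
  have key : ∑ k ∈ Finset.range (m+3),
      (((m:ℚ)+2)^2 * Fq (m+2) k
        - (11*((m:ℚ)+2)^2 - 11*((m:ℚ)+2) + 3) * Fq (m+1) k
        - ((m:ℚ)+1)^2 * Fq m k) = 0 := by
    have : ∑ k ∈ Finset.range (m+3), (Gq m (k+1) - Gq m k) = Gq m (m+3) - Gq m 0 :=
      Finset.sum_range_sub (Gq m) (m+3)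
    rw [Finset.sum_congr rfl (fun k _ => step m k), this]
    have hend : Gq m (m+3) = Pq ((m:ℚ)+2) (((m+2:ℕ):ℚ)+1) * Fq (m+1) (m+2) := rfl
    rw [hend, Fq_eq_zero (show m+1 < m+2 by omega)]
    simp [Gq]
  rw [hb2, hb1, hb0]
  simp only [Finset.sum_sub_distrib, ← Finset.mul_sum] at key
  linarith [key]

lemma cb_step (m : ℕ) :
    ((m:ℚ)+1) * ((2*(m+1)).choose (m+1)) = 2*(2*(m:ℚ)+1) * ((2*m).choose m) := by
  have := Nat.succ_mul_centralBinom_succ m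
  simp only [Nat.centralBinom] at this
  exact_mod_cast this


/-- The coefficients of the holomorphic solution of the Picard–Fuchs operator
`θ⁴ - 4z(11θ² + 11θ + 3)(2θ+1)² - 16z²(2θ+1)²(2θ+3)²` of the mirror of the
Grassmannian Calabi–Yau `Gr(2,5) ∩ (1,2,2)`:
`Aₙ = C(2n,n)² · Σ_{k=0}^n C(n,k)² C(n+k,k)`. -/
def grassmannianCoeff (n : ℕ) : ℕ :=
  (Nat.choose (2 * n) n) ^ 2 *
    ∑ k ∈ Finset.range (n + 1), (Nat.choose n k) ^ 2 * Nat.choose (n + k) k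

lemma grass_cast (n : ℕ) :
    (grassmannianCoeff n : ℚ) = ((2*n).choose n : ℚ)^2 * apB n := by
  unfold grassmannianCoeff apB
  push_cast
  ring

/-- The series `Φ(z) = Σ Aₙ zⁿ` with `Aₙ = C(2n,n)² Σ_k C(n,k)² C(n+k,k)` is
annihilated by `θ⁴ - 4z(11θ²+11θ+3)(2θ+1)² - 16z²(2θ+1)²(2θ+3)²`, `θ = z d/dz`;
equivalently the coefficients satisfy `A₀ = 1`, `A₁ = 12` and the recursion
`n⁴ Aₙ = 4(11(n-1)² + 11(n-1) + 3)(2n-1)² A_{n-1} + 16(2n-3)²(2n-1)² A_{n-2}`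
for all `n ≥ 2`. -/
theorem grassmannian_picard_fuchs_recursion :
    grassmannianCoeff 0 = 1 ∧ grassmannianCoeff 1 = 12 ∧
    ∀ n : ℕ, 2 ≤ n →
      (n : ℤ) ^ 4 * grassmannianCoeff n =
        4 * (11 * ((n : ℤ) - 1) ^ 2 + 11 * ((n : ℤ) - 1) + 3) * (2 * (n : ℤ) - 1) ^ 2 *
          grassmannianCoeff (n - 1) +
        16 * (2 * (n : ℤ) - 3) ^ 2 * (2 * (n : ℤ) - 1) ^ 2 * grassmannianCoeff (n - 2) := by
  refine ⟨by decide, by decide, ?_⟩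
  intro n hn
  obtain ⟨m, rfl⟩ : ∃ m, n = m + 2 := ⟨n - 2, by omega⟩
  have h1 : m + 2 - 1 = m + 1 := rfl
  have h2 : m + 2 - 2 = m := rfl
  rw [h1, h2]
  have hQ : ((m:ℚ)+2)^4 * grassmannianCoeff (m+2) =
      4 * (11 * ((m:ℚ)+1)^2 + 11 * ((m:ℚ)+1) + 3) * (2*((m:ℚ)+2) - 1)^2 *
        grassmannianCoeff (m+1) +
      16 * (2*((m:ℚ)+2) - 3)^2 * (2*((m:ℚ)+2) - 1)^2 * grassmannianCoeff m := by
    set C2 : ℚ := ((2*(m+2)).choose (m+2) : ℚ) with hC2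
    set C1 : ℚ := ((2*(m+1)).choose (m+1) : ℚ) with hC1
    set C0 : ℚ := ((2*m).choose m : ℚ) with hC0
    set B2 : ℚ := (apB (m+2) : ℚ)
    set B1 : ℚ := (apB (m+1) : ℚ)
    set B0 : ℚ := (apB m : ℚ)
    have E1 : (((m:ℚ)+2) * C2)^2 = (2*(2*((m:ℚ)+1)+1) * C1)^2 := by
      rw [show ((m:ℚ)+2) = ((m+1:ℕ):ℚ)+1 from by push_cast; ring]
      rw [cb_step (m+1)]
      push_cast
      ring
    have E2 : (((m:ℚ)+1) * C1)^2 = (2*(2*(m:ℚ)+1) * C0)^2 := by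
      rw [cb_step m]
    have E3 := apery2 m
    rw [grass_cast, grass_cast, grass_cast]
    rw [← hC2, ← hC1, ← hC0]
    linear_combination (((m:ℚ)+2)^2 * B2) * E1
      + (4*(2*(m:ℚ)+3)^2 * C1^2) * E3
      + (4*(2*(m:ℚ)+3)^2 * B0) * E2
  qify
  push_cast at hQ ⊢
  linear_combination hQ
end
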